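/- arXiv:2109.00582 — 2 statements merged into one kernel-verified Lean document; each statement's English description precedes it below -/
import Mathlib

section
/- For p in (0, 1/2), the inequality 2 * p^2 * log p > (2p)^2 * log(2p) holds if and only if p < 1/4. -/
theorem stmt_2_general (p : ℝ) (hp : 0 < p) :
    2 * p ^ 2 * Real.log p > (2 * p) ^ 2 * Real.log (2 * p) ↔ p < 1 / 4 := by
  have hrhs : (2 * p) ^ 2 * Real.log (2 * p) = 2 * p ^ 2 * Real.log ((2 * p) ^ 2) := by
    rw [Real.log_pow]
    push_cast
    ring
  rw [hrhs, gt_iff_lt, mul_lt_mul_iff_right₀ (by positivity),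
    Real.log_lt_log_iff (by positivity) hp]
  constructor <;> intro h <;> nlinarith

theorem stmt_2 (p : ℝ) (hp : 0 < p) (hp2 : p < 1 / 2) :
    2 * p ^ 2 * Real.log p > (2 * p) ^ 2 * Real.log (2 * p) ↔ p < 1 / 4 :=
  stmt_2_general p hp
end

section
/- Fix p2 in (0, e^{-1/2}). Then there exists epsilon > 0 such that for all p1 in (0, epsilon), p1^2 * log p1 + p2^2 * log p2 > (p1 + p2)^2 * log(p1 + p2). -/
/-!
Dividing `a ^ 2 log a + b ^ 2 log b - (a + b) ^ 2 log (a + b)` by `a > 0` leaves `a log a`, which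
tends to `0`, minus a difference quotient of `x ↦ x ^ 2 log x` at `b`, which tends to
`b (2 log b + 1)`. The limit `-b (2 log b + 1)` is positive when `log b < -1/2`, so the
expression is positive for all small `a > 0`.
-/

open Real Filter Topology Set

lemma Real.hasDerivAt_sq_mul_log {x : ℝ} (hx : x ≠ 0) :
    HasDerivAt (fun x ↦ x ^ 2 * log x) (x * (2 * log x + 1)) x := by
  refine ((hasDerivAt_pow 2 x).mul (hasDerivAt_log hx)).congr_deriv ?_
  norm_num
  field_simp

lemma Real.tendsto_sq_mul_log_defect_div_nhdsGT_zero {b : ℝ} (hb : b ≠ 0) :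
    Tendsto (fun a ↦ (a ^ 2 * log a + b ^ 2 * log b - (a + b) ^ 2 * log (a + b)) / a)
      (𝓝[>] 0) (𝓝 (-(b * (2 * log b + 1)))) := by
  have hmul : Tendsto (fun a ↦ a * log a) (𝓝[>] 0) (𝓝 0) := by
    simpa using (continuous_mul_log.tendsto 0).mono_left nhdsWithin_le_nhds
  have hslope := (hasDerivAt_sq_mul_log hb).tendsto_slope_zero_right
  rw [← zero_sub]
  refine (hmul.sub hslope).congr' ?_
  filter_upwards [self_mem_nhdsWithin] with a (ha : 0 < a)
  simp only [smul_eq_mul, add_comm b a]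
  field_simp
  ring

theorem stmt_7 (p2 : ℝ) (h0 : 0 < p2) (h1 : p2 < Real.exp (-(1 / 2))) :
    ∃ ε > 0, ∀ p1 : ℝ, 0 < p1 → p1 < ε →
      p1 ^ 2 * Real.log p1 + p2 ^ 2 * Real.log p2 >
        (p1 + p2) ^ 2 * Real.log (p1 + p2) := by
  have hlog : log p2 < -(1 / 2) := (log_lt_iff_lt_exp h0).2 h1
  have hlim_pos : 0 < -(p2 * (2 * log p2 + 1)) := by nlinarith
  have hev := (tendsto_sq_mul_log_defect_div_nhdsGT_zero h0.ne').eventually (lt_mem_nhds hlim_pos)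
  obtain ⟨ε, hε, hsub⟩ := mem_nhdsGT_iff_exists_Ioo_subset.1 hev
  refine ⟨ε, hε, fun p1 hp1 hp1ε ↦ ?_⟩
  have := (div_pos_iff_of_pos_right hp1).1 (hsub ⟨hp1, hp1ε⟩)
  linarith
end
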